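/- If (X,𝓔) and (X,𝓔') are finitary coarse spaces on the same set X with the same parallelity relation on ultrafilters (∥_{(X,𝓔)} = ∥_{(X,𝓔')}), then 𝓔 = 𝓔'. -/

import Mathlib

open Set

/-- A coarse structure on a set `X`. -/
structure CoarseStructure (X : Type*) where
  sets : Set (Set (X × X))
  diagonal_mem : ∀ E ∈ sets, ∀ x : X, (x, x) ∈ E
  comp_mem : ∀ E ∈ sets, ∀ E' ∈ sets,
    {q : X × X | ∃ z : X, (q.1, z) ∈ E ∧ (z, q.2) ∈ E'} ∈ sets
  inv_mem : ∀ E ∈ sets, {q : X × X | (q.2, q.1) ∈ E} ∈ sets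
  subset_mem : ∀ E ∈ sets, ∀ E', E' ⊆ E → (∀ x : X, (x, x) ∈ E') → E' ∈ sets
  covers : ⋃₀ sets = Set.univ

/-- The ball `E[A]`. -/
def ball {X : Type*} (E : Set (X × X)) (A : Set X) : Set X := {y | ∃ a ∈ A, (a, y) ∈ E}

/-- A bounded subset of a coarse space. -/
def CoarseStructure.Bounded {X : Type*} (C : CoarseStructure X) (B : Set X) : Prop :=
  ∃ E ∈ C.sets, ∃ x : X, B ⊆ ball E {x}

/-- A finitary coarse space: uniformly finite balls. -/
def CoarseStructure.Finitary {X : Type*} (C : CoarseStructure X) : Prop :=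
  ∀ E ∈ C.sets, ∃ n : ℕ, ∀ x : X, (ball E {x}).Finite ∧ (ball E {x}).ncard < n

/-- The set `X^♯` of ultrafilters all of whose members are unbounded. -/
def CoarseStructure.Sharp {X : Type*} (C : CoarseStructure X) : Set (Ultrafilter X) :=
  {p | ∀ P ∈ p, ¬ C.Bounded P}

/-- The parallelity relation on ultrafilters. -/
def CoarseStructure.Parallel {X : Type*} (C : CoarseStructure X) (p q : Ultrafilter X) : Prop :=
  ∃ E ∈ C.sets, ∀ P ∈ p, ball E P ∈ q

/-- The entourage determined by a set of permutations. -/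
def entourage {X : Type*} (F : Set (Equiv.Perm X)) : Set (X × X) :=
  {q | ∃ g ∈ F, q.2 = g q.1}

/-- The finitary coarse structure `X_G` determined by a group `G` of permutations of `X`:
its entourages are the diagonal-containing subsets of `{(x,gx) : x ∈ X, g ∈ F}`
for finite `F ⊆ G` with `id ∈ F`. -/
def XGsets {X : Type*} (G : Subgroup (Equiv.Perm X)) : Set (Set (X × X)) :=
  {E | (∀ x : X, (x, x) ∈ E) ∧ ∃ F : Finset (Equiv.Perm X),
    (1 : Equiv.Perm X) ∈ F ∧ ↑F ⊆ (G : Set (Equiv.Perm X)) ∧ E ⊆ entourage ↑F}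

/-- A free ultrafilter. -/
def IsFree {X : Type*} (p : Ultrafilter X) : Prop := (p : Filter X) ≤ Filter.cofinite

/-- `X*`, the space of free ultrafilters with the Stone topology. -/
def FreeUF (X : Type*) : Type _ := {p : Ultrafilter X // IsFree p}

instance (X : Type*) : TopologicalSpace (FreeUF X) :=
  instTopologicalSpaceSubtype

/-- The orbit `Gp` of an ultrafilter under the induced action `gp = {gP : P ∈ p}`. -/
def ufOrbit {X : Type*} (G : Subgroup (Equiv.Perm X)) (p : Ultrafilter X) :
    Set (Ultrafilter X) :=
  {q | ∃ g ∈ G, q = Ultrafilter.map (⇑g) p}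

/-- The `p`-companion `Δ_p(A) = A* ∩ Gp`. -/
def compan {X : Type*} (G : Subgroup (Equiv.Perm X)) (p : Ultrafilter X) (A : Set X) :
    Set (Ultrafilter X) :=
  {q | A ∈ q ∧ q ∈ ufOrbit G p}

/-- Large subsets of `X_G`. -/
def IsLarge {X : Type*} (G : Subgroup (Equiv.Perm X)) (A : Set X) : Prop :=
  ∃ E ∈ XGsets G, ball E A = Set.univ

/-- Thick subsets of `X_G`. -/
def IsThick {X : Type*} (G : Subgroup (Equiv.Perm X)) (A : Set X) : Prop :=
  ∀ E ∈ XGsets G, ∃ a ∈ A, ball E {a} ⊆ A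

/-- Thin (discrete) subsets of `X_G`. -/
def IsThin {X : Type*} (G : Subgroup (Equiv.Perm X)) (A : Set X) : Prop :=
  ∀ E ∈ XGsets G, ∃ B : Set X, B.Finite ∧ ∀ a ∈ A \ B, ball E {a} ∩ A = {a}

/-- Sparse subsets of `X_G`. -/
def IsSparse {X : Type*} (G : Subgroup (Equiv.Perm X)) (A : Set X) : Prop :=
  ∀ p : Ultrafilter X, IsFree p → (compan G p A).Finite

/-- Scattered subsets of `X_G`. -/
def IsScattered {X : Type*} (G : Subgroup (Equiv.Perm X)) (A : Set X) : Prop :=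
  ∀ Y ⊆ A, Y.Infinite →
    ∃ p : Ultrafilter X, IsFree p ∧ Y ∈ p ∧ (compan G p Y).Finite

/-- Close subsets of a coarse space. -/
def CoarseStructure.Close {X : Type*} (C : CoarseStructure X) (A B : Set X) : Prop :=
  ∃ E ∈ C.sets, A ⊆ ball E B ∧ B ⊆ ball E A

/-- Close subsets of `X_G`. -/
def CloseG {X : Type*} (G : Subgroup (Equiv.Perm X)) (A B : Set X) : Prop :=
  ∃ E ∈ XGsets G, A ⊆ ball E B ∧ B ⊆ ball E A

/-- Linked subsets of `X_G`. -/
def LinkedG {X : Type*} (G : Subgroup (Equiv.Perm X)) (A B : Set X) : Prop :=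
  (A.Finite ∧ B.Finite) ∨
    ∃ A' ⊆ A, ∃ B' ⊆ B, A'.Infinite ∧ B'.Infinite ∧ CloseG G A' B'


open Set

/-- The `n`-th block `{g_0^{ε_0} ⋯ g_n^{ε_n} x_n : ε_i ∈ {0,1}}`. -/
def pwBlock {X : Type*} (g : ℕ → Equiv.Perm X) (x : ℕ → X) (n : ℕ) : Set X :=
  {y | ∃ ε : Fin (n + 1) → Bool,
    y = ((List.ofFn fun i : Fin (n + 1) =>
      (g i) ^ (if ε i then 1 else 0)).prod : Equiv.Perm X) (x n)}

/-- A piece-wise shifted FP-set determined by the group `G`. -/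
def IsPWShiftedFP {X : Type*} (G : Subgroup (Equiv.Perm X)) (Y : Set X) : Prop :=
  ∃ g : ℕ → Equiv.Perm X, ∃ x : ℕ → X,
    (∀ n, g n ∈ G) ∧
    (∀ m n, m ≠ n → Disjoint (pwBlock g x m) (pwBlock g x n)) ∧
    (∀ n, (pwBlock g x n).ncard = 2 ^ (n + 1)) ∧
    Y = ⋃ n, pwBlock g x n

/-- The group of all self-homeomorphisms of a topological space, as a subgroup
of the permutation group. -/
def homeoSubgroup (X : Type*) [TopologicalSpace X] : Subgroup (Equiv.Perm X) where
  carrier := {g | Continuous g ∧ Continuous g.symm}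
  one_mem' := ⟨continuous_id, continuous_id⟩
  mul_mem' := by
    rintro a b ⟨ha1, ha2⟩ ⟨hb1, hb2⟩
    refine ⟨?_, ?_⟩
    · simpa [Equiv.Perm.mul_def, Equiv.coe_trans] using ha1.comp hb1
    · simpa [Equiv.Perm.mul_def, Equiv.symm_trans_apply] using (hb2.comp ha2 : _)
  inv_mem' := by
    rintro a ⟨ha1, ha2⟩
    exact ⟨ha2, by simpa [Equiv.Perm.inv_def] using ha1⟩


/-- The parallelity relation on ultrafilters over the coarse space `X_G`. -/
def ParallelG {X : Type*} (G : Subgroup (Equiv.Perm X)) (p q : Ultrafilter X) : Prop :=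
  ∃ E ∈ XGsets G, ∀ P ∈ p, ball E P ∈ q

/-- Linked subsets of a coarse space. -/
def CoarseStructure.Linked {X : Type*} (C : CoarseStructure X) (A B : Set X) : Prop :=
  (C.Bounded A ∧ C.Bounded B) ∨
    ∃ A' ⊆ A, ∃ B' ⊆ B, ¬ C.Bounded A' ∧ ¬ C.Bounded B' ∧ C.Close A' B'

/-- The orbit `Gp` viewed as a subset of the space `X*` of free ultrafilters. -/
def freeOrbit {X : Type*} (G : Subgroup (Equiv.Perm X)) (p : Ultrafilter X) :
    Set (FreeUF X) :=
  {q | q.1 ∈ ufOrbit G p}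

/-!
If `E ∈ 𝓔` is not in `𝓔'`, choose an ultrafilter `u` on `X × X` containing `E \ E'` for every
`E' ∈ 𝓔'`. Its marginals `p` and `q` are free and parallel through `E`, hence parallel through
some `E' ∈ 𝓔'`, which yields an ultrafilter `w ∋ E'` with the same marginals. In a finitary space
`u` and `w` both live on graphs of partial bijections `f` and `h` with `f p = q = h p`, and
Katětov's fixed-point lemma forces `f = h` on a member of `p`. So `u = w ∋ E'`, contradicting
`E \ E' ∈ u`.
-/

section Ultrafilters

open Filter Function

variable {α β : Type*}

theorem exists_mapsTo_compl_subset_union {g : α → α} {S : Set α} (hS : ∀ x ∈ S, g x ≠ x) :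
    ∃ A ⊆ S, MapsTo g A Aᶜ ∧ S ⊆ A ∪ g ⁻¹' A ∪ g '' A := by
  obtain ⟨A, ⟨hAS, hA⟩, hmax⟩ := zorn_subset {A | A ⊆ S ∧ MapsTo g A Aᶜ} fun c hc hchain => by
    refine ⟨⋃₀ c, ⟨sUnion_subset fun A hA => (hc hA).1, ?_⟩, fun A hA => subset_sUnion_of_mem hA⟩
    rintro a ⟨A₁, hA₁, ha⟩ ⟨A₂, hA₂, hga⟩
    rcases hchain.total hA₁ hA₂ with h | h
    · exact (hc hA₂).2 (h ha) hga
    · exact (hc hA₁).2 ha (h hga)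
  refine ⟨A, hAS, hA, fun x hx => ?_⟩
  by_contra hcov
  simp only [mem_union, mem_preimage, mem_image, not_or] at hcov
  obtain ⟨⟨hxA, hgxA⟩, hxgA⟩ := hcov
  have hins : insert x A ∈ {A | A ⊆ S ∧ MapsTo g A Aᶜ} := by
    refine ⟨insert_subset hx hAS, ?_⟩
    rintro a (rfl | ha)
    · simp [hS a hx, hgxA]
    · simp only [mem_compl_iff, mem_insert_iff, not_or]
      exact ⟨fun h => hxgA ⟨a, ha, h⟩, hA ha⟩
  exact hxA (hmax hins (subset_insert x A) (mem_insert x A))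

namespace Ultrafilter

/-- Katětov's fixed-point lemma, injective case. -/
theorem eventually_apply_eq_self_of_map_eq_self {p : Ultrafilter α} {g : α → α} {D : Set α}
    (hD : D ∈ p) (hg : InjOn g D) (hp : p.map g = p) : ∀ᶠ x in (p : Filter α), g x = x := by
  by_contra hfix
  set S := {x ∈ D | g x ≠ x}
  have hS : S ∈ p := inter_mem hD (compl_mem_iff_notMem.2 hfix)
  obtain ⟨A, hAS, hA, hcov⟩ := exists_mapsTo_compl_subset_union (S := S) fun x hx => hx.2
  have hpre : ∀ T, g ⁻¹' T ∈ p ↔ T ∈ p := fun T => by rw [← Ultrafilter.mem_map, hp]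
  have hAp : A ∉ p := fun h => by
    obtain ⟨x, hx, hgx⟩ := nonempty_of_mem (inter_mem h ((hpre A).2 h))
    exact hA hx hgx
  -- `x = g a` and `g x = g a'` with `a' ∈ A` force `a' = x`, so `g a ∈ A`.
  have hgAp : g '' A ∉ p := fun h => by
    obtain ⟨x, ⟨⟨a, ha, rfl⟩, a', ha', hgx⟩, hxS⟩ :=
      nonempty_of_mem (inter_mem (inter_mem h ((hpre _).2 h)) hS)
    rw [hg (hAS ha').1 hxS.1 hgx] at ha'
    exact hA ha ha'
  rcases union_mem_iff.1 (mem_of_superset hS hcov) with h | h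
  · exact (union_mem_iff.1 h).elim hAp fun h => hAp ((hpre A).1 h)
  · exact hgAp h

theorem eventuallyEq_of_map_eq {p : Ultrafilter α} {f h : α → β} {D : Set α} (hD : D ∈ p)
    (hf : InjOn f D) (hh : InjOn h D) (hfh : p.map f = p.map h) : f =ᶠ[(p : Filter α)] h := by
  have : Nonempty α := (nonempty_of_mem hD).to_subtype.map Subtype.val
  set D' := D ∩ h ⁻¹' (f '' D)
  have hfD : f '' D ∈ p.map f :=
    Ultrafilter.mem_map.2 (mem_of_superset hD fun x hx => mem_image_of_mem f hx)
  have hD' : D' ∈ p := inter_mem hD (Ultrafilter.mem_map.1 (hfh ▸ hfD))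
  -- `g = f⁻¹ ∘ h` moves `p` to itself, hence fixes `p`-almost every point.
  set g := invFunOn f D ∘ h
  have hg : ∀ x ∈ D', g x ∈ D ∧ f (g x) = h x := fun x hx =>
    ⟨invFunOn_mem hx.2, invFunOn_eq hx.2⟩
  have hginj : InjOn g D' := fun x hx y hy hxy =>
    hh hx.1 hy.1 (by rw [← (hg x hx).2, ← (hg y hy).2, hxy])
  have hgp : p.map g = p := by
    apply coe_injective
    rw [coe_map]
    have hDg : D ∈ Filter.map g p :=
      Filter.mem_map.2 (mem_of_superset hD' fun x hx => (hg x hx).1)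
    have hfg : f ∘ g =ᶠ[p] h := eventuallyEq_of_mem hD' fun x hx => (hg x hx).2
    refine (Filter.map_eq_map_iff_of_injOn hDg hD hf).1 ?_
    rw [Filter.map_map, Filter.map_congr hfg, ← coe_map, ← coe_map, hfh]
  filter_upwards [eventually_apply_eq_self_of_map_eq_self hD' hginj hgp, hD'] with x hx hx'
  rw [← (hg x hx').2, hx]

theorem exists_injOn_eq_map_graph {u : Ultrafilter (α × β)} {G : Set (α × β)} (hG : G ∈ u)
    (hfst : InjOn Prod.fst G) (hsnd : InjOn Prod.snd G) :
    ∃ f : α → β, InjOn f (Prod.fst '' G) ∧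
      u = (u.map Prod.fst).map (fun a => (a, f a)) := by
  have : Nonempty (α × β) := (nonempty_of_mem hG).to_subtype.map Subtype.val
  set f : α → β := fun a => (invFunOn Prod.fst G a).2
  have hf : ∀ z ∈ G, f z.1 = z.2 := fun z hz => by
    simp only [f, hfst.leftInvOn_invFunOn hz]
  refine ⟨f, ?_, ?_⟩
  · rintro _ ⟨z, hz, rfl⟩ _ ⟨z', hz', rfl⟩ hzz'
    rw [hsnd hz hz' (by rw [← hf z hz, ← hf z' hz', hzz'])]
  · apply coe_injective
    rw [coe_map, coe_map, Filter.map_map]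
    conv_lhs => rw [← Filter.map_id (f := (u : Filter (α × β)))]
    exact Filter.map_congr (eventuallyEq_of_mem hG fun z hz => by simp [hf z hz])

theorem eq_of_map_fst_eq_of_map_snd_eq {u w : Ultrafilter (α × β)} {G H : Set (α × β)}
    (hG : G ∈ u) (hGfst : InjOn Prod.fst G) (hGsnd : InjOn Prod.snd G)
    (hH : H ∈ w) (hHfst : InjOn Prod.fst H) (hHsnd : InjOn Prod.snd H)
    (hfst : u.map Prod.fst = w.map Prod.fst) (hsnd : u.map Prod.snd = w.map Prod.snd) :
    u = w := by
  obtain ⟨f, hf, hu⟩ := exists_injOn_eq_map_graph hG hGfst hGsnd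
  obtain ⟨h, hh, hw⟩ := exists_injOn_eq_map_graph hH hHfst hHsnd
  set p := u.map Prod.fst
  have hD : Prod.fst '' G ∩ Prod.fst '' H ∈ p :=
    inter_mem (image_mem_map hG) (hfst ▸ image_mem_map hH)
  have hfh : p.map f = p.map h := by
    have hu' := congrArg (map Prod.snd) hu
    have hw' := congrArg (map Prod.snd) hw
    rw [map_map] at hu' hw'
    rw [← hfst] at hw'
    exact hu'.symm.trans (hsnd.trans hw')
  have hfh' := eventuallyEq_of_map_eq hD (hf.mono inter_subset_left)
    (hh.mono inter_subset_right) hfh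
  calc u = p.map (fun a => (a, f a)) := hu
    _ = p.map (fun a => (a, h a)) := by
      apply coe_injective
      simp only [coe_map]
      exact Filter.map_congr (hfh'.mono fun a ha => congrArg (Prod.mk a) ha)
    _ = w := by rw [hw, ← hfst]

theorem exists_map_fst_eq_map_snd_eq_of_ball_mem {p q : Ultrafilter α} {R : Set (α × α)}
    (h : ∀ P ∈ p, ball R P ∈ q) :
    ∃ w : Ultrafilter (α × α), R ∈ w ∧ w.map Prod.fst = p ∧ w.map Prod.snd = q := by
  have : ((p : Filter α) ×ˢ (q : Filter α) ⊓ 𝓟 R).NeBot := by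
    rw [inf_principal_neBot_iff]
    intro U hU
    obtain ⟨P, hP, Q, hQ, hPQ⟩ := mem_prod_iff.1 hU
    obtain ⟨y, hyQ, a, haP, haR⟩ := nonempty_of_mem (inter_mem hQ (h P hP))
    exact ⟨(a, y), hPQ ⟨haP, hyQ⟩, haR⟩
  set w := Ultrafilter.of ((p : Filter α) ×ˢ (q : Filter α) ⊓ 𝓟 R)
  have hw : (w : Filter (α × α)) ≤ (p : Filter α) ×ˢ (q : Filter α) :=
    (of_le _).trans inf_le_left
  exact ⟨w, of_le _ (mem_inf_of_right (mem_principal_self R)),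
    coe_le_coe.1 (tendsto_fst.mono_left hw), coe_le_coe.1 (tendsto_snd.mono_left hw)⟩

end Ultrafilter

theorem IsFree.map {u : Ultrafilter α} (hu : IsFree u) {f : α → β} {G : Set α} (hG : G ∈ u)
    (hf : InjOn f G) : IsFree (u.map f) := by
  intro K hK
  have hfin : (G ∩ f ⁻¹' Kᶜ).Finite :=
    Finite.of_injOn (f := f) (fun x hx => hx.2) (hf.mono inter_subset_left) (mem_cofinite.1 hK)
  refine Ultrafilter.mem_map.2 (mem_of_superset (inter_mem hG (hu hfin.compl_mem_cofinite)) ?_)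
  rintro x ⟨hxG, hx⟩
  by_contra hxK
  exact hx ⟨hxG, hxK⟩

def HasBoundedDegree (R : Set (α × β)) : Prop :=
  ∃ n : ℕ, (∀ a, {b | (a, b) ∈ R}.encard ≤ n) ∧ ∀ b, {a | (a, b) ∈ R}.encard ≤ n

theorem exists_injOn_fin_of_encard_le {s : Set α} {n : ℕ} (hs : s.encard ≤ n) :
    ∃ e : α → Fin (n + 1), InjOn e s := by
  obtain ⟨e, -, he⟩ := (finite_of_encard_le_coe hs).exists_injOn_of_encard_le
    (t := (univ : Set (Fin (n + 1)))) (hs.trans (by simp))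
  exact ⟨e, he⟩

/-- Colouring each edge by its positions in its row and in its column splits `R` into finitely
many graphs of partial bijections, one of which belongs to `u`. -/
theorem HasBoundedDegree.exists_injOn_fst_snd {R : Set (α × β)} (hR : HasBoundedDegree R)
    {u : Ultrafilter (α × β)} (hRu : R ∈ u) :
    ∃ G ∈ u, InjOn Prod.fst G ∧ InjOn Prod.snd G := by
  obtain ⟨n, hrow, hcol⟩ := hR
  choose e he using fun a => exists_injOn_fin_of_encard_le (hrow a)
  choose e' he' using fun b => exists_injOn_fin_of_encard_le (hcol b)
  set c : α × β → Fin (n + 1) × Fin (n + 1) := fun z => (e z.1 z.2, e' z.2 z.1)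
  obtain ⟨k, hk⟩ := (u.map c).eq_pure_of_finite
  have hck : c ⁻¹' {k} ∈ u := Ultrafilter.mem_map.1 (hk ▸ Ultrafilter.mem_pure.2 rfl)
  refine ⟨R ∩ c ⁻¹' {k}, inter_mem hRu hck, ?_, ?_⟩
  · rintro ⟨a, b⟩ ⟨hab, hk₁⟩ ⟨a', b'⟩ ⟨hab', hk₂⟩ (rfl : a = a')
    have hb : e a b = e a b' := congrArg Prod.fst (hk₁.trans hk₂.symm)
    rw [he a hab hab' hb]
  · rintro ⟨a, b⟩ ⟨hab, hk₁⟩ ⟨a', b'⟩ ⟨hab', hk₂⟩ (rfl : b = b')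
    have ha : e' b a = e' b a' := congrArg Prod.snd (hk₁.trans hk₂.symm)
    rw [he' b hab hab' ha]

end Ultrafilters

namespace CoarseStructure

open Filter

variable {X : Type*}

theorem union_mem (C : CoarseStructure X) {E₁ E₂ : Set (X × X)} (h₁ : E₁ ∈ C.sets)
    (h₂ : E₂ ∈ C.sets) : E₁ ∪ E₂ ∈ C.sets := by
  refine C.subset_mem _ (C.comp_mem E₁ h₁ E₂ h₂) _ ?_ fun x => Or.inl (C.diagonal_mem E₁ h₁ x)
  rintro ⟨x, y⟩ (hxy | hxy)
  · exact ⟨y, hxy, C.diagonal_mem E₂ h₂ y⟩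
  · exact ⟨x, C.diagonal_mem E₁ h₁ x, hxy⟩

theorem exists_mem_of_mem (C : CoarseStructure X) (z : X × X) : ∃ E ∈ C.sets, z ∈ E := by
  obtain ⟨E, hE, hz⟩ : z ∈ ⋃₀ C.sets := C.covers ▸ mem_univ z
  exact ⟨E, hE, hz⟩

theorem Finitary.hasBoundedDegree {C : CoarseStructure X} (hC : C.Finitary) {E : Set (X × X)}
    (hE : E ∈ C.sets) : HasBoundedDegree E := by
  have hbound : ∀ E ∈ C.sets, ∃ n : ℕ, ∀ x, {y | (x, y) ∈ E}.encard ≤ n := fun E hE => by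
    obtain ⟨n, hn⟩ := hC E hE
    refine ⟨n, fun x => ?_⟩
    have hball : {y | (x, y) ∈ E} = ball E {x} := by ext; simp [ball]
    rw [hball, ← (hn x).1.cast_ncard_eq]
    exact_mod_cast (hn x).2.le
  obtain ⟨n, hn⟩ := hbound E hE
  obtain ⟨m, hm⟩ := hbound _ (C.inv_mem E hE)
  exact ⟨max n m, fun x => (hn x).trans (by norm_cast; omega),
    fun y => (hm y).trans (by norm_cast; omega)⟩

theorem exists_isFree_forall_diff_mem [Nonempty X] (C : CoarseStructure X) {E : Set (X × X)}
    (hE : ∀ E' ∈ C.sets, ¬ E ⊆ E') :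
    ∃ u : Ultrafilter (X × X), IsFree u ∧ ∀ E' ∈ C.sets, E \ E' ∈ u := by
  have : Nonempty C.sets := by
    obtain ⟨E', hE', -⟩ := C.exists_mem_of_mem (Classical.arbitrary (X × X))
    exact ⟨⟨E', hE'⟩⟩
  have : (⨅ E' : C.sets, 𝓟 (E \ E'.1)).NeBot := by
    refine iInf_neBot_of_directed' ?_ fun E' => principal_neBot_iff.2 ?_
    · rintro ⟨E₁, h₁⟩ ⟨E₂, h₂⟩
      exact ⟨⟨E₁ ∪ E₂, C.union_mem h₁ h₂⟩,
        principal_mono.2 (sdiff_subset_sdiff_right subset_union_left),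
        principal_mono.2 (sdiff_subset_sdiff_right subset_union_right)⟩
    · exact sdiff_nonempty.2 (hE E'.1 E'.2)
  set u := Ultrafilter.of (⨅ E' : C.sets, 𝓟 (E \ E'.1))
  have hdiff : ∀ E' ∈ C.sets, E \ E' ∈ u := fun E' hE' =>
    Ultrafilter.of_le _ (mem_iInf_of_mem ⟨E', hE'⟩ (mem_principal_self _))
  refine ⟨u, le_cofinite_iff_compl_singleton_mem.2 fun z => ?_, hdiff⟩
  obtain ⟨E', hE', hz⟩ := C.exists_mem_of_mem z
  exact mem_of_superset (hdiff E' hE') fun y hy (hyz : y = z) => hy.2 (hyz ▸ hz)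

theorem parallel_map_fst_map_snd (C : CoarseStructure X) {E : Set (X × X)} (hE : E ∈ C.sets)
    {u : Ultrafilter (X × X)} (hEu : E ∈ u) : C.Parallel (u.map Prod.fst) (u.map Prod.snd) :=
  ⟨E, hE, fun _ hP =>
    Ultrafilter.mem_map.2 (mem_of_superset (inter_mem hP hEu) fun z hz => ⟨z.1, hz.1, hz.2⟩)⟩

theorem sets_subset_of_parallel_imp [Nonempty X] {C C' : CoarseStructure X} (hC : C.Finitary)
    (hC' : C'.Finitary)
    (himp : ∀ p q : Ultrafilter X, IsFree p → IsFree q → C.Parallel p q → C'.Parallel p q) :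
    C.sets ⊆ C'.sets := by
  intro E hE
  by_contra hE'
  obtain ⟨u, hu, hdiff⟩ := C'.exists_isFree_forall_diff_mem fun E' h hsub =>
    hE' (C'.subset_mem E' h E hsub (C.diagonal_mem E hE))
  obtain ⟨E₀, hE₀, -⟩ := C'.exists_mem_of_mem (Classical.arbitrary (X × X))
  have hEu : E ∈ u := mem_of_superset (hdiff E₀ hE₀) sdiff_subset
  obtain ⟨G, hG, hGfst, hGsnd⟩ := (hC.hasBoundedDegree hE).exists_injOn_fst_snd hEu
  obtain ⟨E', hE', hpar⟩ := himp _ _ (hu.map hG hGfst) (hu.map hG hGsnd)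
    (C.parallel_map_fst_map_snd hE hEu)
  obtain ⟨w, hE'w, hwfst, hwsnd⟩ := Ultrafilter.exists_map_fst_eq_map_snd_eq_of_ball_mem hpar
  obtain ⟨H, hH, hHfst, hHsnd⟩ := (hC'.hasBoundedDegree hE').exists_injOn_fst_snd hE'w
  have huw : u = w := Ultrafilter.eq_of_map_fst_eq_of_map_snd_eq hG hGfst hGsnd hH hHfst hHsnd
    hwfst.symm hwsnd.symm
  obtain ⟨z, hz, hz'⟩ := Ultrafilter.nonempty_of_mem (inter_mem (hdiff E' hE') (huw ▸ hE'w))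
  exact hz.2 hz'

end CoarseStructure

/-- Two finitary coarse structures on the same infinite set with the same
parallelity relation on free ultrafilters coincide. -/
theorem parallel_determines_structure {X : Type*} [Infinite X]
    (C C' : CoarseStructure X) (hC : C.Finitary) (hC' : C'.Finitary)
    (h : ∀ p q : Ultrafilter X, IsFree p → IsFree q →
      (C.Parallel p q ↔ C'.Parallel p q)) :
    C.sets = C'.sets :=
  (CoarseStructure.sets_subset_of_parallel_imp hC hC' fun p q hp hq => (h p q hp hq).1).antisymm
    (CoarseStructure.sets_subset_of_parallel_imp hC' hC fun p q hp hq => (h p q hp hq).2)
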